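/- For every integer m ≥ 0, 2^m = Σ_{j=2}^{m+2} (−1)^{m−j} · S(m+1, j−1) · (j!/2), where S denotes the Stirling number of the second kind. -/

import Mathlib

/-!
The Stirling numbers of the second kind are the coefficients of `X ^ n` in the basis of falling
factorials: `X ^ n = ∑ₖ S(n, k) X (X - 1) ⋯ (X - k + 1)`. At `X = -2` the falling factorial of
length `k` is `(-1) ^ k (k + 1)!`, so `∑ₖ (-1) ^ (n + k) S(n, k) (k + 1)! = 2 ^ n`. Taking
`n = m + 1`, putting `j = k + 1` and halving gives the claim.
-/

/-- Stirling numbers of the second kind: `stirling ℓ k` is the number of partitions of an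
`ℓ`-element set into `k` nonempty blocks. -/
def stirling : ℕ → ℕ → ℕ
  | 0, 0 => 1
  | 0, _ + 1 => 0
  | _ + 1, 0 => 0
  | l + 1, k + 1 => (k + 1) * stirling l (k + 1) + stirling l k

open Finset Polynomial Nat

theorem stirling_eq_stirlingSecond : stirling = stirlingSecond := by
  funext n k
  induction n generalizing k with
  | zero => cases k <;> rfl
  | succ n ih => cases k <;> simp [stirling, stirlingSecond_succ_succ, ih]

namespace Polynomial

variable (R : Type*) [Ring R]

theorem descPochhammer_mul_X (k : ℕ) :
    descPochhammer R k * X = descPochhammer R (k + 1) + (k : R[X]) * descPochhammer R k := by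
  rw [descPochhammer_succ_right, mul_sub, ← Nat.cast_comm]
  abel

theorem sum_stirlingSecond_mul_descPochhammer (n : ℕ) :
    ∑ k ∈ range (n + 1), (stirlingSecond n k : R[X]) * descPochhammer R k = X ^ n := by
  induction n with
  | zero => simp
  | succ n ih =>
    set g : ℕ → R[X] := fun k => (stirlingSecond n k : R[X]) * k * descPochhammer R k
    -- `g 0 = 0` and `g (n + 1) = 0`, so shifting the index does not change the sum
    have hg : ∑ k ∈ range (n + 1), g (k + 1) = ∑ k ∈ range (n + 1), g k := by
      have h := sum_range_succ' g (n + 1)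
      rw [sum_range_succ] at h
      simpa [g, stirlingSecond_eq_zero_of_lt n.lt_succ_self] using h.symm
    calc ∑ k ∈ range (n + 1 + 1), (stirlingSecond (n + 1) k : R[X]) * descPochhammer R k
        = ∑ k ∈ range (n + 1), (g (k + 1) + stirlingSecond n k * descPochhammer R (k + 1)) := by
          rw [sum_range_succ', stirlingSecond_succ_zero, Nat.cast_zero, zero_mul, add_zero]
          refine sum_congr rfl fun k _ => ?_
          rw [stirlingSecond_succ_succ, Nat.cast_add, Nat.cast_mul, Nat.cast_comm (k + 1), add_mul]
      _ = ∑ k ∈ range (n + 1), (stirlingSecond n k : R[X]) * (descPochhammer R k * X) := by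
          rw [sum_add_distrib, hg, ← sum_add_distrib]
          refine sum_congr rfl fun k _ => ?_
          rw [descPochhammer_mul_X, mul_add, add_comm (g k), ← mul_assoc]
      _ = X ^ (n + 1) := by simp only [← mul_assoc, ← sum_mul, ih, pow_succ]

end Polynomial

theorem descPochhammer_eval_neg_two (k : ℕ) :
    (descPochhammer ℤ k).eval (-2) = (-1) ^ k * (k + 1)! := by
  induction k with
  | zero => simp
  | succ k ih =>
    rw [descPochhammer_succ_eval, ih, Nat.factorial_succ (k + 1)]
    push_cast
    ring

theorem sum_neg_one_pow_mul_stirlingSecond_mul_factorial (n : ℕ) :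
    ∑ k ∈ range (n + 1), (-1 : ℤ) ^ (n + k) * stirlingSecond n k * (k + 1)! = 2 ^ n := by
  have h := congrArg (eval (-2)) (sum_stirlingSecond_mul_descPochhammer ℤ n)
  simp only [eval_finsetSum, eval_mul, eval_natCast, descPochhammer_eval_neg_two, eval_pow,
    eval_X] at h
  calc _ = (-1) ^ n * ∑ k ∈ range (n + 1), (stirlingSecond n k : ℤ) * ((-1) ^ k * (k + 1)!) := by
        rw [mul_sum]
        exact sum_congr rfl fun k _ => by ring
    _ = 2 ^ n := by rw [h, ← mul_pow]; norm_num

theorem cast_factorial_div_two_mul_two {j : ℕ} (hj : 2 ≤ j) : ((j ! / 2 : ℕ) : ℤ) * 2 = j ! := by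
  exact_mod_cast Nat.div_mul_cancel (Nat.dvd_factorial two_pos hj)

theorem stmt_4 (m : ℕ) :
    (2 ^ m : ℤ) =
      ∑ j ∈ Finset.Icc 2 (m + 2),
        (-1 : ℤ) ^ (m + j) * stirling (m + 1) (j - 1) * ((Nat.factorial j / 2 : ℕ) : ℤ) := by
  refine mul_right_cancel₀ (two_ne_zero : (2 : ℤ) ≠ 0) ?_
  rw [← pow_succ, ← sum_neg_one_pow_mul_stirlingSecond_mul_factorial, sum_range_succ',
    stirlingSecond_succ_zero, Nat.cast_zero, mul_zero, zero_mul, add_zero, sum_mul,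
    ← Ico_add_one_right_eq_Icc, sum_Ico_eq_sum_range, stirling_eq_stirlingSecond]
  refine sum_congr rfl fun k _ => ?_
  rw [mul_assoc _ (((2 + k)! / 2 : ℕ) : ℤ), cast_factorial_div_two_mul_two (by omega),
    show 2 + k - 1 = k + 1 by omega, show m + (2 + k) = m + 1 + (k + 1) by omega, add_comm 2 k,
    mul_assoc]
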